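/- arXiv:2110.09799 — 3 statements merged into one kernel-verified Lean document; each statement's English description precedes it below -/
import Mathlib

section
/- Let G be a bipartite graph with parts A and B with girth at least 12 (no cycle of length < 12). Form a graph F on B by, for each a ∈ A, choosing a partition N(a) = S_a ∪ T_a and joining every vertex of S_a to every vertex of T_a. Then F contains no cycle of length 5. -/
/-!
Label every edge `b b'` of `F` by a vertex `a ∈ A` through which it arises. Along a cycle of `F`,
replace each edge by the path `b, a, b'` of `G`, merging maximal runs of consecutive edges with the
same label. Because the vertices of the cycle are distinct and lie in `B` while labels lie in `A`,
the result is a closed trail of `G`, of length at most twice that of the cycle, unless all labels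
coincide. A 5-cycle would thus give a circuit of length at most 10 in `G`, which is impossible, so
all its edges cross the same partition `S a ∪ T a`, which forces even length.
-/

namespace SimpleGraph.Walk

variable {V : Type*} {G F : SimpleGraph V} (ℓ : F.Dart → V)

theorem even_length_iff_of_forall_darts_cross (s : Set V) {u v : V} (p : F.Walk u v)
    (hp : ∀ d ∈ p.darts, (d.fst ∈ s ↔ d.snd ∉ s)) : Even p.length ↔ (u ∈ s ↔ v ∈ s) := by
  induction p with
  | nil => simp
  | cons h p ih =>
    simp only [darts_cons, List.mem_cons, forall_eq_or_imp] at hp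
    rw [length_cons, Nat.even_add_one, ih hp.2]
    tauto

def lastLabel : V → {u v : V} → F.Walk u v → V
  | a, _, _, .nil => a
  | _, _, _, .cons h p => lastLabel (ℓ ⟨(_, _), h⟩) p

theorem adj_lastLabel (hℓ : ∀ d, G.Adj (ℓ d) d.snd) {a u v : V} (ha : G.Adj a u)
    (p : F.Walk u v) : G.Adj (p.lastLabel ℓ a) v := by
  induction p generalizing a with
  | nil => exact ha
  | cons h p ih => exact ih (hℓ _)

theorem lastLabel_notMem {B : Set V} (hℓB : ∀ d, ℓ d ∉ B) {a u v : V} (haB : a ∉ B)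
    (p : F.Walk u v) : p.lastLabel ℓ a ∉ B := by
  induction p generalizing a with
  | nil => exact haB
  | cons h p ih => exact ih (hℓB _)

variable [DecidableEq V] (hℓ : ∀ d, G.Adj d.fst (ℓ d) ∧ G.Adj (ℓ d) d.snd)

/-- Alternates between labels and vertices of `p`, visiting a vertex `x` of `p` (between the labels
of the edges entering and leaving it) only when these two labels differ, so that runs of consecutive
edges with equal labels are merged. It starts at `a`, treated as the label of an edge entering `p`,
and ends at the label of the last edge of `p`, without visiting `v`. -/
def bergeLift : (a : V) → {u v : V} → G.Adj a u → (p : F.Walk u v) → G.Walk a (p.lastLabel ℓ a)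
  | _, _, _, _, .nil => .nil
  | a, _, _, ha, .cons h p =>
    let d : F.Dart := ⟨(_, _), h⟩
    if hlab : ℓ d = a then (bergeLift a (hlab ▸ (hℓ d).2) p).copy rfl (by rw [lastLabel, hlab])
    else (Walk.cons ha (.cons (hℓ d).1 (bergeLift (ℓ d) (hℓ d).2 p))).copy rfl (by rw [lastLabel])

variable {ℓ hℓ}

theorem length_bergeLift_le {a u v : V} (ha : G.Adj a u) (p : F.Walk u v) :
    (p.bergeLift ℓ hℓ a ha).length ≤ 2 * p.length := by
  induction p generalizing a with
  | nil => simp [bergeLift, lastLabel]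
  | cons h p ih =>
    rw [bergeLift]
    split_ifs with hlab
    · simp only [length_copy, length_cons]
      have := ih (hlab ▸ (hℓ _).2)
      omega
    · have := ih (hℓ ⟨(_, _), h⟩).2
      simp only [length_copy, length_cons]
      omega

theorem forall_darts_label_eq_of_nil_bergeLift {a u v : V} (ha : G.Adj a u) (p : F.Walk u v)
    (hnil : (p.bergeLift ℓ hℓ a ha).Nil) : ∀ d ∈ p.darts, ℓ d = a := by
  induction p generalizing a with
  | nil => simp
  | cons h p ih =>
    rw [bergeLift] at hnil
    split_ifs at hnil with hlab
    · simp only [nil_copy] at hnil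
      simpa [hlab] using ih _ hnil
    · simp at hnil

theorem mem_map_fst_darts_of_mem_edges_bergeLift {B : Set V} (hℓB : ∀ d, ℓ d ∉ B) {a u v : V}
    (haB : a ∉ B) (ha : G.Adj a u) (p : F.Walk u v) :
    ∀ e ∈ (p.bergeLift ℓ hℓ a ha).edges, ∀ x ∈ e, x ∈ B → x ∈ p.darts.map (·.fst) := by
  induction p generalizing a with
  | nil => simp [bergeLift, lastLabel]
  | cons h p ih =>
    rw [bergeLift]
    split_ifs with hlab
    · intro e he x hx hxB
      simp only [edges_copy] at he
      exact List.mem_cons_of_mem _ (ih haB _ e he x hx hxB)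
    · intro e he x hx hxB
      simp only [edges_copy, edges_cons, List.mem_cons] at he
      simp only [darts_cons, List.map_cons, List.mem_cons]
      rcases he with rfl | rfl | he
      · rcases Sym2.mem_iff.1 hx with rfl | rfl
        exacts [absurd hxB haB, Or.inl rfl]
      · rcases Sym2.mem_iff.1 hx with rfl | rfl
        exacts [Or.inl rfl, absurd hxB (hℓB _)]
      · exact Or.inr (ih (hℓB _) _ e he x hx hxB)

theorem isTrail_bergeLift {B : Set V} (hB : ∀ d : F.Dart, d.fst ∈ B) (hℓB : ∀ d, ℓ d ∉ B)
    {a u v : V} (haB : a ∉ B) (ha : G.Adj a u) (p : F.Walk u v)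
    (hp : (p.darts.map (·.fst)).Nodup) : (p.bergeLift ℓ hℓ a ha).IsTrail := by
  induction p generalizing a with
  | nil => simp [bergeLift, lastLabel]
  | @cons x y z h p ih =>
    simp only [darts_cons, List.map_cons, List.nodup_cons] at hp
    rw [bergeLift]
    split_ifs with hlab
    · simpa using ih haB _ hp.2
    · have hx : ∀ w, s(x, w) ∉ (p.bergeLift ℓ hℓ _ (hℓ ⟨(_, _), h⟩).2).edges := fun w hw =>
        hp.1 (mem_map_fst_darts_of_mem_edges_bergeLift hℓB (hℓB _) _ p _ hw x
          (Sym2.mem_mk_left _ _) (hB ⟨(_, _), h⟩))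
      simp only [isTrail_copy, isTrail_cons, edges_cons, List.mem_cons, ih (hℓB _) _ hp.2]
      refine ⟨⟨trivial, hx _⟩, ?_⟩
      rintro (hax | hax)
      · exact hlab (by grind [Sym2.eq_iff])
      · exact hx a (Sym2.eq_swap ▸ hax)

theorem IsCycle.exists_label_eq_or_egirth_le
    (hℓ : ∀ d, G.Adj d.fst (ℓ d) ∧ G.Adj (ℓ d) d.snd) {B : Set V} (hB : ∀ d : F.Dart, d.fst ∈ B)
    (hℓB : ∀ d, ℓ d ∉ B) {u : V} {c : F.Walk u u} (hc : c.IsCycle) :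
    (∃ a, ∀ d ∈ c.darts, ℓ d = a) ∨ G.egirth ≤ 2 * c.length := by
  cases c with
  | nil => exact absurd hc not_isCycle_nil
  | cons h p =>
    let d : F.Dart := ⟨(_, _), h⟩
    -- starting from the label of the last dart makes the lift closed
    let a := p.lastLabel ℓ (ℓ d)
    have ha : G.Adj a u := adj_lastLabel ℓ (fun d => (hℓ d).2) (hℓ d).2 p
    have haB : a ∉ B := lastLabel_notMem ℓ hℓB (hℓB d) p
    let q : G.Walk a a := (cons h p).bergeLift ℓ hℓ a ha
    by_cases hq : q.Nil
    · exact Or.inl ⟨a, forall_darts_label_eq_of_nil_bergeLift ha _ hq⟩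
    · have hcirc : q.IsCircuit := ⟨isTrail_bergeLift hB hℓB haB ha _
        (by rw [map_fst_darts]; exact hc.nodup_dropLast_support), fun h' => hq (h' ▸ Nil.nil)⟩
      right
      calc G.egirth ≤ q.length := hcirc.egirth_le_length
        _ ≤ 2 * (cons h p).length := by exact_mod_cast length_bergeLift_le ha _

end SimpleGraph.Walk

open SimpleGraph Walk

theorem stmt_7_general {V : Type*} (G : SimpleGraph V) (A B : Set V)
    (hdisj : Disjoint A B)
    (hbip : ∀ u v, G.Adj u v → (u ∈ A ∧ v ∈ B) ∨ (u ∈ B ∧ v ∈ A))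
    (hgirth : ∀ (v : V) (w : G.Walk v v), w.IsCycle → 12 ≤ w.length)
    (S T : V → Set V)
    (hST : ∀ a ∈ A, S a ∪ T a = {v | G.Adj a v} ∧ Disjoint (S a) (T a))
    (F : SimpleGraph V)
    (hF : ∀ b b', F.Adj b b' ↔
      ∃ a ∈ A, (b ∈ S a ∧ b' ∈ T a) ∨ (b ∈ T a ∧ b' ∈ S a)) :
    ¬ ∃ (v : V) (w : F.Walk v v), w.IsCycle ∧ w.length = 5 := by
  classical
  rintro ⟨u, c, hc, hlen⟩
  choose ℓ hℓA hℓST using fun d : F.Dart => (hF _ _).1 d.adj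
  have hℓ : ∀ d : F.Dart, G.Adj d.fst (ℓ d) ∧ G.Adj (ℓ d) d.snd := fun d => by
    have hmem : d.fst ∈ S (ℓ d) ∪ T (ℓ d) ∧ d.snd ∈ S (ℓ d) ∪ T (ℓ d) := by
      rcases hℓST d with h | h <;> simp [h]
    rw [(hST _ (hℓA d)).1] at hmem
    exact ⟨hmem.1.symm, hmem.2⟩
  have hℓB : ∀ d, ℓ d ∉ B := fun d => Set.disjoint_left.1 hdisj (hℓA d)
  have hB : ∀ d : F.Dart, d.fst ∈ B := fun d =>
    ((hbip _ _ (hℓ d).1.symm).resolve_right fun h => hℓB d h.1).2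
  rcases hc.exists_label_eq_or_egirth_le hℓ hB hℓB with ⟨a, hlab⟩ | hshort
  · have hcross : ∀ d ∈ c.darts, (d.fst ∈ S a ↔ d.snd ∉ S a) := fun d hd => by
      have hdisjST := Set.disjoint_left.1 (hST _ (hℓA d)).2
      rw [← hlab d hd]
      rcases hℓST d with ⟨h₁, h₂⟩ | ⟨h₁, h₂⟩ <;> grind
    have := (even_length_iff_of_forall_darts_cross (S a) c hcross).2 Iff.rfl
    rw [hlen] at this
    exact absurd this (by decide)
  · have hgirth' : (12 : ℕ∞) ≤ G.egirth := le_egirth.2 fun v w hw => by exact_mod_cast hgirth v w hw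
    rw [hlen] at hshort
    exact absurd (hgirth'.trans hshort) (by decide)

/-- Random block construction: `G` is bipartite with parts `A`, `B` and girth at least 12.
For each `a ∈ A` the neighborhood `N(a)` is partitioned into `S a` and `T a`, and `F` is
the graph on `B` whose edges are all pairs joined through some `a` (one endpoint in `S a`,
the other in `T a`).  Then `F` contains no cycle of length 5. -/
theorem stmt_7 {V : Type*} (G : SimpleGraph V) (A B : Set V)
    (hpart : ∀ v, v ∈ A ∨ v ∈ B) (hdisj : Disjoint A B)
    (hbip : ∀ u v, G.Adj u v → (u ∈ A ∧ v ∈ B) ∨ (u ∈ B ∧ v ∈ A))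
    (hgirth : ∀ (v : V) (w : G.Walk v v), w.IsCycle → 12 ≤ w.length)
    (S T : V → Set V)
    (hST : ∀ a ∈ A, S a ∪ T a = {v | G.Adj a v} ∧ Disjoint (S a) (T a))
    (F : SimpleGraph V)
    (hF : ∀ b b', F.Adj b b' ↔
      ∃ a ∈ A, (b ∈ S a ∧ b' ∈ T a) ∨ (b ∈ T a ∧ b' ∈ S a)) :
    ¬ ∃ (v : V) (w : F.Walk v v), w.IsCycle ∧ w.length = 5 :=
  stmt_7_general G A B hdisj hbip hgirth S T hST F hF
end

section
/- With notation as in the random block construction: for a fixed set I ⊆ B of size t, the probability that I is an independent set in the random graph F equals the product over a ∈ A of 2^{1 - t_a} (taking the factor to be 1 when t_a = 0), where t_a = |I ∩ N(a)|. Hence the expected number of independent sets of size t in F is at most C(|B|, t) · max over t-sets I of ∏_{a ∈ A, t_a ≥ 1} 2^{1 - t_a}. -/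
/-! The colourings `f a : B → Bool` are chosen independently, so the number of admissible `f`
factors over `a ∈ A`. A single colouring is admissible iff it is constant on `I ∩ N(a)`: two
choices there and free choices elsewhere, a fraction `2 ^ (1 - t_a)` of all colourings when
`t_a ≥ 1`. Summing the resulting bound `M` over the `C(|B|, t)` sets gives the second claim. -/

open Finset

theorem card_filter_forall_apply {ι : Type*} {β : ι → Type*} [Fintype ι] [DecidableEq ι]
    [∀ i, Fintype (β i)] (p : ∀ i, β i → Prop) [∀ i, DecidablePred (p i)] :
    #{f : ∀ i, β i | ∀ i, p i (f i)} = ∏ i, #{x : β i | p i x} := by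
  rw [← Fintype.card_piFinset]
  congr 1
  ext f
  simp

theorem card_filter_eqOn_const {B β : Type*} [Fintype B] [DecidableEq B] [Fintype β]
    [DecidableEq β] (s : Finset B) (c : β) :
    #{g : B → β | ∀ b ∈ s, g b = c} = Fintype.card β ^ (Fintype.card B - #s) := by
  have hfiber (b : B) : #{x : β | b ∈ s → x = c} = if b ∈ s then 1 else Fintype.card β := by
    split_ifs with hb <;> simp [hb, filter_eq']
  calc #{g : B → β | ∀ b ∈ s, g b = c} = ∏ b, #{x : β | b ∈ s → x = c} :=
        card_filter_forall_apply fun b x => b ∈ s → x = c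
    _ = Fintype.card β ^ (Fintype.card B - #s) := by
        simp only [hfiber, prod_ite, prod_const_one, one_mul, prod_const]
        rw [filter_not, card_sdiff_of_subset (filter_subset _ _), filter_mem_eq_inter, univ_inter,
          card_univ]

theorem card_filter_monochromatic {B : Type*} [Fintype B] [DecidableEq B] {s : Finset B}
    (hs : s.Nonempty) :
    #{g : B → Bool | (∀ b ∈ s, g b = true) ∨ (∀ b ∈ s, g b = false)} =
      2 ^ (Fintype.card B - #s + 1) := by
  have hdisj : Disjoint (α := Finset (B → Bool)) {g | ∀ b ∈ s, g b = true}
      {g | ∀ b ∈ s, g b = false} := by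
    refine disjoint_filter.2 fun g _ htrue hfalse => ?_
    obtain ⟨b, hb⟩ := hs
    simpa [htrue b hb] using hfalse b hb
  rw [filter_or, card_union_of_disjoint hdisj, card_filter_eqOn_const, card_filter_eqOn_const,
    Fintype.card_bool, pow_succ, mul_two]

theorem card_filter_monochromatic_div {B : Type*} [Fintype B] [DecidableEq B] (s : Finset B) :
    (#{g : B → Bool | (∀ b ∈ s, g b = true) ∨ (∀ b ∈ s, g b = false)} : ℚ) / 2 ^ Fintype.card B
      = if #s = 0 then 1 else 2 ^ (1 - (#s : ℤ)) := by
  rcases s.eq_empty_or_nonempty with rfl | hs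
  · simp
  rw [card_filter_monochromatic hs, if_neg (card_pos.2 hs).ne']
  push_cast
  rw [← zpow_natCast, ← zpow_natCast, ← zpow_sub₀ two_ne_zero, Nat.cast_add,
    Nat.cast_sub s.card_le_univ]
  ring_nf

theorem card_filter_forall_monochromatic_div {A B : Type*} [Fintype A] [DecidableEq A]
    [Fintype B] [DecidableEq B] (s : A → Finset B) :
    (#{f : A → B → Bool | ∀ a, (∀ b ∈ s a, f a b = true) ∨ (∀ b ∈ s a, f a b = false)} : ℚ) /
        Fintype.card (A → B → Bool) =
      ∏ a, if #(s a) = 0 then 1 else 2 ^ (1 - (#(s a) : ℤ)) := by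
  have hcard : (Fintype.card (A → B → Bool) : ℚ) = ∏ _a : A, (2 : ℚ) ^ Fintype.card B := by
    simp
  rw [card_filter_forall_apply fun a (g : B → Bool) => (∀ b ∈ s a, g b = true) ∨
    (∀ b ∈ s a, g b = false), hcard, Nat.cast_prod, ← prod_div_distrib]
  exact prod_congr rfl fun a _ => card_filter_monochromatic_div (s a)

/-- Random block construction, probability computation.  `Nbr a ⊆ B` is the neighborhood
of `a ∈ A`; a uniformly random assignment `f : A → B → Bool` splits each neighborhood into
two sides independently across `a ∈ A`.  A set `I ⊆ B` is independent in the resulting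
graph iff for every `a`, the set `I ∩ Nbr a` lies entirely on one side.  The probability
of this is `∏_a 2^{1 - t_a}` where `t_a = |I ∩ Nbr a|` (factor `1` when `t_a = 0`), and
hence the expected number of independent `t`-sets is at most `C(|B|, t) · M` for any `M`
bounding all these products over `t`-sets `I`. -/
theorem stmt_9 {A B : Type*} [Fintype A] [DecidableEq A] [Fintype B] [DecidableEq B]
    (Nbr : A → Finset B) (t : ℕ) (M : ℚ)
    (hM : ∀ I : Finset B, I.card = t →
      (∏ a : A, if (I ∩ Nbr a).card = 0 then (1 : ℚ)
        else 2 ^ ((1 : ℤ) - ((I ∩ Nbr a).card : ℤ))) ≤ M) :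
    (∀ I : Finset B,
      ((Finset.univ.filter fun f : A → B → Bool =>
          ∀ a, (∀ b ∈ I ∩ Nbr a, f a b = true) ∨ (∀ b ∈ I ∩ Nbr a, f a b = false)).card : ℚ) /
        (Fintype.card (A → B → Bool)) =
      ∏ a : A, if (I ∩ Nbr a).card = 0 then (1 : ℚ)
        else 2 ^ ((1 : ℤ) - ((I ∩ Nbr a).card : ℤ))) ∧
    (∑ I ∈ Finset.univ.powersetCard t,
      ((Finset.univ.filter fun f : A → B → Bool =>
          ∀ a, (∀ b ∈ I ∩ Nbr a, f a b = true) ∨ (∀ b ∈ I ∩ Nbr a, f a b = false)).card : ℚ) /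
        (Fintype.card (A → B → Bool))) ≤
      (Nat.choose (Fintype.card B) t : ℚ) * M := by
  have hprob (I : Finset B) := card_filter_forall_monochromatic_div fun a => I ∩ Nbr a
  refine ⟨hprob, ?_⟩
  calc _ ≤ #(univ.powersetCard t : Finset (Finset B)) • M :=
        sum_le_card_nsmul _ _ _ fun I hI => (hprob I).trans_le (hM I (mem_powersetCard_univ.1 hI))
    _ = (Nat.choose (Fintype.card B) t : ℚ) * M := by
        rw [card_powersetCard, card_univ, nsmul_eq_mul]
end

section
/- Let F' be a graph on N vertices with at most Q independent sets of size m, and suppose C(N, m) · (Q / C(N, m))^k < 1. Then there exist graphs F_1, ..., F_k on the same vertex set, each isomorphic to F', such that every m-set of vertices contains an edge of at least one F_i. Equivalently, the graph F_{k+1} whose edges are the pairs lying in no F_i is K_m-free. -/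
open Finset

private lemma exists_perm_mem_iff {V : Type*} [Fintype V] [DecidableEq V]
    (M M' : Finset V) (h : M'.card = M.card) :
    ∃ τ : Equiv.Perm V, ∀ x, x ∈ M' ↔ τ x ∈ M := by
  classical
  have hc : Fintype.card {x // x ∈ M'} = Fintype.card {x // x ∈ M} := by
    simpa [Fintype.card_coe] using h
  have hc' : Fintype.card {x // ¬ x ∈ M'} = Fintype.card {x // ¬ x ∈ M} := by
    rw [Fintype.card_subtype_compl, Fintype.card_subtype_compl, hc]
  refine ⟨Equiv.subtypeCongr (Fintype.equivOfCardEq hc) (Fintype.equivOfCardEq hc'),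
    fun x => ?_⟩
  by_cases hx : x ∈ M'
  · have : Equiv.subtypeCongr (Fintype.equivOfCardEq hc) (Fintype.equivOfCardEq hc') x
        = (Fintype.equivOfCardEq hc ⟨x, hx⟩ : V) := by
      simp [Equiv.subtypeCongr, Equiv.sumCompl_symm_apply_of_pos hx]
    rw [this]
    exact ⟨fun _ => (Fintype.equivOfCardEq hc ⟨x, hx⟩).2, fun _ => hx⟩
  · have : Equiv.subtypeCongr (Fintype.equivOfCardEq hc) (Fintype.equivOfCardEq hc') x
        = (Fintype.equivOfCardEq hc' ⟨x, hx⟩ : V) := by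
      simp [Equiv.subtypeCongr, Equiv.sumCompl_symm_apply_of_neg hx]
    rw [this]
    exact ⟨fun h => absurd h hx, fun h => absurd h (Fintype.equivOfCardEq hc' ⟨x, hx⟩).2⟩

/-- Let `F'` be a graph on `N` vertices with at most `Q` independent sets of size `m`,
and suppose `C(N,m) · (Q / C(N,m))^k < 1`.  Then there exist `k` graphs on the same
vertex set, each isomorphic to `F'`, such that every `m`-set of vertices fails to be
independent in at least one of them (equivalently, the graph of pairs covered by no copy
is `K_m`-free). -/
theorem stmt_12 {V : Type*} [Fintype V] [DecidableEq V] (F' : SimpleGraph V)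
    (N m k Q : ℕ) (hN : Fintype.card V = N)
    (hQ : {s : Finset V | s.card = m ∧ ∀ u ∈ s, ∀ v ∈ s, ¬ F'.Adj u v}.ncard ≤ Q)
    (hsmall : (Nat.choose N m : ℝ) * ((Q : ℝ) / (Nat.choose N m)) ^ k < 1) :
    ∃ F : Fin k → SimpleGraph V,
      (∀ i, Nonempty (F i ≃g F')) ∧
      ∀ M : Finset V, M.card = m → ∃ i, ∃ u ∈ M, ∃ v ∈ M, (F i).Adj u v := by
  classical
  by_cases hA : ∃ M₀ : Finset V, M₀.card = m
  swap
  · exact ⟨fun _ => F', fun i => ⟨SimpleGraph.Iso.refl⟩,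
      fun M hM => absurd ⟨M, hM⟩ hA⟩
  obtain ⟨M₀, hM₀⟩ := hA
  set ind : Finset V → Prop := fun s => ∀ u ∈ s, ∀ v ∈ s, ¬ F'.Adj u v with hind
  set Q' : ℕ := (univ.filter fun s : Finset V => s.card = m ∧ ind s).card with hQ'def
  have hQ' : Q' ≤ Q := by
    have : {s : Finset V | s.card = m ∧ ∀ u ∈ s, ∀ v ∈ s, ¬ F'.Adj u v}
        = ↑(univ.filter fun s : Finset V => s.card = m ∧ ind s) := by
      ext s; simp [hind]
    rwa [this, Set.ncard_coe_finset] at hQ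
  set A : Finset (Finset V) := univ.filter fun s : Finset V => s.card = m with hAdef
  have hAcard : A.card = N.choose m := by
    rw [hAdef, ← Finset.powerset_univ, ← Finset.powersetCard_eq_filter,
      Finset.card_powersetCard, Finset.card_univ, hN]
  have hM₀A : M₀ ∈ A := by simp [hAdef, hM₀]
  set f : Finset V → ℕ :=
    fun M => (univ.filter fun σ : Equiv.Perm V => ind (M.image σ)).card with hfdef
  -- f is constant on A
  have hconst : ∀ M ∈ A, f M = f M₀ := by
    intro M hM
    have hMm : M.card = m := by simpa [hAdef] using hM
    obtain ⟨τ, hτ⟩ := exists_perm_mem_iff M M₀ (hM₀.trans hMm.symm)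
    have himg : M₀.image τ = M := by
      apply Finset.eq_of_subset_of_card_le
      · intro x hx
        obtain ⟨y, hy, rfl⟩ := Finset.mem_image.1 hx
        exact (hτ y).1 hy
      · rw [Finset.card_image_of_injective _ τ.injective, hM₀, hMm]
    refine Finset.card_bij' (fun σ _ => σ * τ) (fun σ _ => σ * τ⁻¹) ?_ ?_ ?_ ?_
    · intro σ hσ
      simp only [Finset.mem_filter, Finset.mem_univ, true_and] at hσ ⊢
      have : M₀.image (⇑(σ * τ)) = M.image σ := by
        rw [← himg, Finset.image_image]; rfl
      rwa [this]
    · intro σ hσ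
      simp only [Finset.mem_filter, Finset.mem_univ, true_and] at hσ ⊢
      have : M.image (⇑(σ * τ⁻¹)) = M₀.image σ := by
        rw [← himg, Finset.image_image]
        congr 1
        funext x
        simp
      rwa [this]
    · intro σ _; simp [mul_assoc]
    · intro σ _; simp [mul_assoc]
  -- for each σ, the number of independent images is Q'
  have hperσ : ∀ σ : Equiv.Perm V,
      (A.filter fun M => ind (M.image σ)).card = Q' := by
    intro σ
    rw [hQ'def]
    refine Finset.card_bij' (fun M _ => M.image σ) (fun S _ => S.image σ.symm) ?_ ?_ ?_ ?_
    · intro M hM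
      simp only [Finset.mem_filter, Finset.mem_univ, true_and, hAdef] at hM ⊢
      exact ⟨by rw [Finset.card_image_of_injective _ σ.injective]; exact hM.1, hM.2⟩
    · intro S hS
      simp only [Finset.mem_filter, Finset.mem_univ, true_and, hAdef] at hS
      have himg : (S.image ⇑σ.symm).image ⇑σ = S := by
        rw [Finset.image_image]; simp
      refine Finset.mem_filter.2 ⟨Finset.mem_filter.2 ⟨Finset.mem_univ _, ?_⟩, ?_⟩
      · rw [Finset.card_image_of_injective _ σ.symm.injective]; exact hS.1
      · rw [himg]; exact hS.2
    · intro M _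
      show (M.image ⇑σ).image ⇑σ.symm = M
      rw [Finset.image_image]; simp
    · intro S _
      show (S.image ⇑σ.symm).image ⇑σ = S
      rw [Finset.image_image]; simp
  -- double counting
  have hsum : A.card * f M₀ = Q' * Nat.factorial (Fintype.card V) := by
    have h1 : ∑ M ∈ A, f M = A.card * f M₀ := by
      rw [Finset.sum_congr rfl hconst, Finset.sum_const, smul_eq_mul]
    have h2 : ∑ M ∈ A, f M = Q' * Nat.factorial (Fintype.card V) := by
      calc ∑ M ∈ A, f M
          = ∑ M ∈ A, ∑ σ : Equiv.Perm V, if ind (M.image σ) then 1 else 0 := by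
            refine Finset.sum_congr rfl fun M _ => ?_
            rw [hfdef]
            exact Finset.card_filter _ _
        _ = ∑ σ : Equiv.Perm V, ∑ M ∈ A, if ind (M.image σ) then 1 else 0 :=
            Finset.sum_comm
        _ = ∑ σ : Equiv.Perm V, Q' := by
            refine Finset.sum_congr rfl fun σ _ => ?_
            rw [← Finset.card_filter, hperσ σ]
        _ = Q' * Nat.factorial (Fintype.card V) := by
            rw [Finset.sum_const, Finset.card_univ, Fintype.card_perm, smul_eq_mul,
              mul_comm]
    rw [← h1, h2]
  -- union bound over bad tuples of permutations
  set Bad : Finset (Fin k → Equiv.Perm V) :=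
    univ.filter (fun σs => ∃ M ∈ A, ∀ i, ind (M.image (σs i))) with hBaddef
  have hBadsub : Bad ⊆ A.biUnion
      (fun M => univ.filter fun σs : Fin k → Equiv.Perm V =>
        ∀ i, ind (M.image (σs i))) := by
    intro σs hσs
    simp only [hBaddef, Finset.mem_filter, Finset.mem_univ, true_and] at hσs
    obtain ⟨M, hM, hMind⟩ := hσs
    exact Finset.mem_biUnion.2 ⟨M, hM, Finset.mem_filter.2 ⟨Finset.mem_univ _, hMind⟩⟩
  have hcardM : ∀ M ∈ A,
      (univ.filter fun σs : Fin k → Equiv.Perm V => ∀ i, ind (M.image (σs i))).card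
        = f M₀ ^ k := by
    intro M hM
    have hpi : (univ.filter fun σs : Fin k → Equiv.Perm V => ∀ i, ind (M.image (σs i)))
        = Fintype.piFinset (fun _ : Fin k =>
            univ.filter fun σ : Equiv.Perm V => ind (M.image σ)) := by
      ext σs
      simp [Fintype.mem_piFinset]
    rw [hpi, Fintype.card_piFinset]
    calc ∏ _i : Fin k, (univ.filter fun σ : Equiv.Perm V => ind (M.image σ)).card
        = ∏ _i : Fin k, f M₀ := by
          refine Finset.prod_congr rfl fun i _ => ?_
          rw [← hconst M hM, hfdef]
      _ = f M₀ ^ k := by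
          rw [Finset.prod_const, Finset.card_univ, Fintype.card_fin]
  have hBadcard : Bad.card ≤ A.card * f M₀ ^ k := by
    calc Bad.card
        ≤ (A.biUnion (fun M => univ.filter fun σs : Fin k → Equiv.Perm V =>
            ∀ i, ind (M.image (σs i)))).card := Finset.card_le_card hBadsub
      _ ≤ ∑ M ∈ A, (univ.filter fun σs : Fin k → Equiv.Perm V =>
            ∀ i, ind (M.image (σs i))).card := Finset.card_biUnion_le
      _ = ∑ _M ∈ A, f M₀ ^ k := Finset.sum_congr rfl hcardM
      _ = A.card * f M₀ ^ k := by rw [Finset.sum_const, smul_eq_mul]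
  -- arithmetic
  have hApos : 0 < A.card := Finset.card_pos.2 ⟨M₀, hM₀A⟩
  have hfactpos : (0 : ℝ) < (Nat.factorial (Fintype.card V) : ℝ) := by
    exact_mod_cast Nat.factorial_pos _
  have hreal : (A.card : ℝ) * ((f M₀ : ℝ)) ^ k
      < ((Nat.factorial (Fintype.card V) : ℝ)) ^ k := by
    have hC : (0 : ℝ) < (A.card : ℝ) := by exact_mod_cast hApos
    have hAR : (A.card : ℝ) = (N.choose m : ℝ) := by exact_mod_cast hAcard
    have hsmall' : (A.card : ℝ) * ((Q : ℝ) / (A.card : ℝ)) ^ k < 1 := by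
      rw [hAR]; exact hsmall
    have hfle : (f M₀ : ℝ)
        ≤ (Q : ℝ) * (Nat.factorial (Fintype.card V) : ℝ) / (A.card : ℝ) := by
      rw [le_div_iff₀ hC, mul_comm]
      have h1 : (A.card : ℝ) * (f M₀ : ℝ)
          = (Q' : ℝ) * (Nat.factorial (Fintype.card V) : ℝ) := by
        exact_mod_cast hsum
      rw [h1]
      have : (Q' : ℝ) ≤ (Q : ℝ) := by exact_mod_cast hQ'
      exact mul_le_mul_of_nonneg_right this (le_of_lt hfactpos)
    calc (A.card : ℝ) * ((f M₀ : ℝ)) ^ k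
        ≤ (A.card : ℝ) * ((Q : ℝ) * (Nat.factorial (Fintype.card V) : ℝ)
            / (A.card : ℝ)) ^ k := by
          refine mul_le_mul_of_nonneg_left ?_ (le_of_lt hC)
          exact pow_le_pow_left₀ (by positivity) hfle k
      _ = ((A.card : ℝ) * ((Q : ℝ) / (A.card : ℝ)) ^ k)
            * ((Nat.factorial (Fintype.card V) : ℝ)) ^ k := by
          rw [show (Q : ℝ) * (Nat.factorial (Fintype.card V) : ℝ) / (A.card : ℝ)
              = ((Q : ℝ) / (A.card : ℝ)) * (Nat.factorial (Fintype.card V) : ℝ) by ring,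
            mul_pow]
          ring
      _ < 1 * ((Nat.factorial (Fintype.card V) : ℝ)) ^ k := by
          exact mul_lt_mul_of_pos_right hsmall' (by positivity)
      _ = ((Nat.factorial (Fintype.card V) : ℝ)) ^ k := one_mul _
  have hnat : A.card * f M₀ ^ k < Nat.factorial (Fintype.card V) ^ k := by
    exact_mod_cast hreal
  have hlt : Bad.card < Fintype.card (Fin k → Equiv.Perm V) := by
    rw [Fintype.card_fun, Fintype.card_perm, Fintype.card_fin]
    exact lt_of_le_of_lt hBadcard hnat
  have hex : ∃ σs : Fin k → Equiv.Perm V, σs ∉ Bad := by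
    by_contra h
    push_neg at h
    have hsub : (univ : Finset (Fin k → Equiv.Perm V)) ⊆ Bad := fun x _ => h x
    have := Finset.card_le_card hsub
    rw [Finset.card_univ] at this
    omega
  obtain ⟨σs, hσs⟩ := hex
  refine ⟨fun i => F'.comap (σs i), fun i => ⟨⟨σs i, fun {a b} => Iff.rfl⟩⟩, ?_⟩
  intro M hM
  have hMA : M ∈ A := by simp [hAdef, hM]
  have h2 : ¬ ∃ M ∈ A, ∀ i, ind (M.image (σs i)) := by
    intro hc
    exact hσs (Finset.mem_filter.2 ⟨Finset.mem_univ _, hc⟩)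
  push_neg at h2
  obtain ⟨i, hi⟩ := h2 M hMA
  simp only [hind] at hi
  push_neg at hi
  obtain ⟨u', hu', v', hv', hadj⟩ := hi
  obtain ⟨u, hu, rfl⟩ := Finset.mem_image.1 hu'
  obtain ⟨v, hv, rfl⟩ := Finset.mem_image.1 hv'
  exact ⟨i, u, hu, v, hv, hadj⟩
end
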